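/- arXiv:1611.07305 — 8 statements merged into one kernel-verified Lean document; each statement's English description precedes it below -/
import Mathlib

section
/- If a partition P of {1, ..., n} maximizes the vector-partition objective ∑_{B ∈ P} ‖S_B‖² over all partitions of {1, ..., n} (with respect to given vectors v_1, ..., v_n ∈ ℝ^d), then for every two distinct blocks B and B' of P, the inner product of their sum points satisfies ⟨S_B, S_{B'}⟩ ≤ 0. -/
/-!
Merging two blocks `B ≠ B'` of `P` into `B ∪ B'` changes the objective by
`‖S_B + S_B'‖² - ‖S_B‖² - ‖S_B'‖² = 2 ⟪S_B, S_B'⟫`, which cannot be positive when `P` is a maximiser.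
-/

open Finset
open scoped RealInnerProductSpace

/-- The vector-partition objective: sum over blocks of the squared norm of the
block's sum point `S_B = ∑ i ∈ B, v i`. -/
noncomputable def vpObj {n d : ℕ} (v : Fin n → EuclideanSpace ℝ (Fin d))
    (P : Finpartition (Finset.univ : Finset (Fin n))) : ℝ :=
  ∑ B ∈ P.parts, ‖∑ i ∈ B, v i‖ ^ 2

namespace Finpartition

variable {α : Type*} [DecidableEq α] {a b c : α}

section Lattice

variable [Lattice α] [OrderBot α]

theorem sup_erase_erase_sup_eq (P : Finpartition a) (hb : b ∈ P.parts) (hc : c ∈ P.parts) :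
    ((P.parts.erase b).erase c).sup id ⊔ (b ⊔ c) = a := by
  refine (le_antisymm ?_ ?_).trans P.sup_parts
  · exact (sup_le (sup_mono ((erase_subset _ _).trans (erase_subset _ _)))
      (sup_le (le_sup (f := id) hb) (le_sup (f := id) hc)))
  refine Finset.sup_le fun d hd => ?_
  by_cases hdb : d = b
  · exact hdb ▸ le_sup_of_le_right le_sup_left
  by_cases hdc : d = c
  · exact hdc ▸ le_sup_of_le_right le_sup_right
  exact le_sup_of_le_left (le_sup (f := id) (by simp [hd, hdb, hdc]))

end Lattice

variable [DistribLattice α] [OrderBot α]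

theorem disjoint_sup_erase_erase (P : Finpartition a) (hb : b ∈ P.parts) (hc : c ∈ P.parts) :
    Disjoint (((P.parts.erase b).erase c).sup id) (b ⊔ c) := by
  simp only [Finset.disjoint_sup_left, mem_erase, disjoint_sup_right, id]
  exact ⟨fun d ⟨_, hdb, hd⟩ => P.disjoint hd hb hdb, fun d ⟨hdc, _, hd⟩ => P.disjoint hd hc hdc⟩

def mergeParts (P : Finpartition a) (hb : b ∈ P.parts) (hc : c ∈ P.parts) : Finpartition a :=
  (P.ofSubset ((erase_subset _ _).trans (erase_subset _ _)) rfl).extend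
    (ne_bot_of_le_ne_bot (P.ne_bot hb) le_sup_left) (P.disjoint_sup_erase_erase hb hc)
    (P.sup_erase_erase_sup_eq hb hc)

theorem mergeParts_parts (P : Finpartition a) (hb : b ∈ P.parts) (hc : c ∈ P.parts) :
    (P.mergeParts hb hc).parts = insert (b ⊔ c) ((P.parts.erase b).erase c) :=
  rfl

theorem sum_mergeParts_add {M : Type*} [AddCommMonoid M] (P : Finpartition a)
    (hb : b ∈ P.parts) (hc : c ∈ P.parts) (hbc : b ≠ c) (f : α → M) :
    ∑ p ∈ (P.mergeParts hb hc).parts, f p + (f b + f c) = ∑ p ∈ P.parts, f p + f (b ⊔ c) := by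
  have hnotMem : b ⊔ c ∉ (P.parts.erase b).erase c := fun h =>
    P.ne_bot hb <| (sup_eq_bot_iff.1 <| (P.disjoint_sup_erase_erase hb hc).symm.eq_bot_of_le
      (le_sup (f := id) h)).1
  rw [mergeParts_parts, sum_insert hnotMem, ← add_sum_erase _ _ hb,
    ← add_sum_erase _ _ (mem_erase.2 ⟨hbc.symm, hc⟩)]
  abel

end Finpartition

theorem vpObj_mergeParts {n d : ℕ} (v : Fin n → EuclideanSpace ℝ (Fin d))
    (P : Finpartition (Finset.univ : Finset (Fin n))) {B B' : Finset (Fin n)}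
    (hB : B ∈ P.parts) (hB' : B' ∈ P.parts) (hne : B ≠ B') :
    vpObj v (P.mergeParts hB hB') = vpObj v P + 2 * ⟪∑ i ∈ B, v i, ∑ i ∈ B', v i⟫ := by
  have hdisj : Disjoint B B' := P.disjoint hB hB' hne
  have h := P.sum_mergeParts_add hB hB' hne fun C => ‖∑ i ∈ C, v i‖ ^ 2
  rw [sup_eq_union, sum_union hdisj, norm_add_sq_real] at h
  unfold vpObj
  linarith

/-- If a partition maximizes the vector-partition objective, then the sum points of
any two distinct blocks have nonpositive inner product. -/
theorem inner_sumPoints_nonpos_of_max {n d : ℕ} (v : Fin n → EuclideanSpace ℝ (Fin d))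
    (P : Finpartition (Finset.univ : Finset (Fin n)))
    (hP : ∀ Q : Finpartition (Finset.univ : Finset (Fin n)), vpObj v Q ≤ vpObj v P) :
    ∀ B ∈ P.parts, ∀ B' ∈ P.parts, B ≠ B' →
      ⟪∑ i ∈ B, v i, ∑ i ∈ B', v i⟫ ≤ 0 := by
  intro B hB B' hB' hne
  have := hP (P.mergeParts hB hB')
  rw [vpObj_mergeParts v P hB hB' hne] at this
  linarith
end

section
/- For any vectors v_1, ..., v_n ∈ ℝ^d, among all partitions of {1, ..., n} that maximize the vector-partition objective ∑_{B ∈ P} ‖S_B‖², there exists one in which the sum points of any two distinct blocks have strictly negative inner product: ⟨S_B, S_{B'}⟩ < 0 for all distinct blocks B, B'. -/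
open Finset
open scoped RealInnerProductSpace

lemma merge_lemma {n d : ℕ} (v : Fin n → EuclideanSpace ℝ (Fin d))
    (P : Finpartition (Finset.univ : Finset (Fin n))) {B B' : Finset (Fin n)}
    (hB : B ∈ P.parts) (hB' : B' ∈ P.parts) (hne : B ≠ B')
    (hip : 0 ≤ ⟪∑ i ∈ B, v i, ∑ i ∈ B', v i⟫) :
    ∃ P' : Finpartition (Finset.univ : Finset (Fin n)),
      vpObj v P ≤ vpObj v P' ∧ P'.parts.card < P.parts.card := by
  classical
  set R : Finset (Finset (Fin n)) := (P.parts.erase B).erase B' with hR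
  have hRsub : R ⊆ P.parts := (erase_subset _ _).trans (erase_subset _ _)
  have hBnotR : B ∉ R := fun h => (notMem_erase B _) (mem_of_mem_erase h)
  have hB'notR : B' ∉ R := notMem_erase _ _
  have hBne : B.Nonempty := Finset.nonempty_iff_ne_empty.2 (P.ne_bot hB)
  have hB'ne : B'.Nonempty := Finset.nonempty_iff_ne_empty.2 (P.ne_bot hB')
  have hdisj : Disjoint B B' := P.disjoint hB hB' hne
  have hins : insert B (insert B' R) = P.parts := by
    rw [hR, insert_erase (mem_erase.2 ⟨Ne.symm hne, hB'⟩), insert_erase hB]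
  set parts' : Finset (Finset (Fin n)) := insert (B ∪ B') R with hparts'
  have hUnotR : B ∪ B' ∉ R := by
    intro h
    have h1 : B ∪ B' ∈ P.parts := hRsub h
    have h2 : B ≠ B ∪ B' := by
      intro h2
      obtain ⟨x, hx⟩ := hB'ne
      have hxB : x ∈ B := h2 ▸ Finset.mem_union_right _ hx
      exact Finset.disjoint_left.1 hdisj hxB hx
    have h3 := P.disjoint hB h1 h2
    exact hBne.ne_empty (disjoint_self.1
      ((Finset.disjoint_union_right.1 h3).1))
  have hpd : (↑parts' : Set (Finset (Fin n))).PairwiseDisjoint id := by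
    rw [hparts', coe_insert]
    refine Set.PairwiseDisjoint.insert (P.disjoint.subset (by exact_mod_cast hRsub)) ?_
    intro C hC hCne
    have hC' : C ∈ P.parts := hRsub hC
    have h1 : Disjoint B C := P.disjoint hB hC' (fun h => hBnotR (h ▸ hC))
    have h2 : Disjoint B' C := P.disjoint hB' hC' (fun h => hB'notR (h ▸ hC))
    exact (Finset.disjoint_union_left.2 ⟨h1, h2⟩).symm.symm
  have hsup : parts'.sup id = (Finset.univ : Finset (Fin n)) := by
    rw [hparts', sup_insert]
    have := P.sup_parts
    rw [← hins, sup_insert, sup_insert] at this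
    rw [← this]
    simp only [id_eq, Finset.sup_eq_union]
    rw [Finset.union_assoc]
  have hbotnot : (⊥ : Finset (Fin n)) ∉ parts' := by
    rw [hparts', mem_insert]
    rintro (h | h)
    · exact hBne.ne_empty (Finset.union_eq_empty.1 h.symm).1
    · exact P.bot_notMem (hRsub h)
  refine ⟨Finpartition.ofErase parts' (Finset.supIndep_iff_pairwiseDisjoint.2 hpd) hsup, ?_, ?_⟩
  · have hparts_eq : (Finpartition.ofErase parts'
        (Finset.supIndep_iff_pairwiseDisjoint.2 hpd) hsup).parts = parts' :=
      erase_eq_of_notMem hbotnot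
    unfold vpObj
    rw [hparts_eq, hparts', ← hins]
    rw [Finset.sum_insert hUnotR, Finset.sum_insert (by
      simp only [mem_insert]; rintro (h | h); exact hne h; exact hBnotR h),
      Finset.sum_insert hB'notR]
    have hsum : ∑ i ∈ B ∪ B', v i = (∑ i ∈ B, v i) + ∑ i ∈ B', v i :=
      Finset.sum_union hdisj
    rw [hsum, ← add_assoc]
    gcongr ?_ + _
    rw [@norm_add_sq_real]
    linarith
  · have hparts_eq : (Finpartition.ofErase parts'
        (Finset.supIndep_iff_pairwiseDisjoint.2 hpd) hsup).parts = parts' :=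
      erase_eq_of_notMem hbotnot
    rw [hparts_eq, hparts', ← hins, card_insert_of_notMem hUnotR,
      card_insert_of_notMem (by
        simp only [mem_insert]; rintro (h | h); exact hne h; exact hBnotR h),
      card_insert_of_notMem hB'notR]
    omega

/-- Among all partitions maximizing the vector-partition objective, there is one in
which sum points of distinct blocks have strictly negative inner products. -/
theorem exists_max_partition_inner_sumPoints_neg {n d : ℕ}
    (v : Fin n → EuclideanSpace ℝ (Fin d)) :
    ∃ P : Finpartition (Finset.univ : Finset (Fin n)),
      (∀ Q : Finpartition (Finset.univ : Finset (Fin n)), vpObj v Q ≤ vpObj v P) ∧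
      ∀ B ∈ P.parts, ∀ B' ∈ P.parts, B ≠ B' →
        ⟪∑ i ∈ B, v i, ∑ i ∈ B', v i⟫ < 0 := by
  classical
  obtain ⟨P, -, hPmax⟩ := Finset.exists_max_image (Finset.univ) (vpObj v)
    ⟨⊥, mem_univ _⟩
  set M : Finset (Finpartition (Finset.univ : Finset (Fin n))) :=
    Finset.univ.filter (fun Q => vpObj v P ≤ vpObj v Q) with hM
  obtain ⟨P0, hP0mem, hP0min⟩ := Finset.exists_min_image M (fun Q => Q.parts.card)
    ⟨P, by simp [hM]⟩
  have hP0max : ∀ Q, vpObj v Q ≤ vpObj v P0 := by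
    intro Q
    have h1 : vpObj v P ≤ vpObj v P0 := (Finset.mem_filter.1 hP0mem).2
    exact (hPmax Q (mem_univ _)).trans h1
  refine ⟨P0, hP0max, ?_⟩
  intro B hB B' hB' hne
  by_contra hcon
  push_neg at hcon
  obtain ⟨P', hle, hcard⟩ := merge_lemma v P0 hB hB' hne hcon
  have hP'M : P' ∈ M := by
    simp only [hM, Finset.mem_filter, Finset.mem_univ, true_and]
    exact ((Finset.mem_filter.1 hP0mem).2).trans hle
  exact absurd (hP0min P' hP'M) (by omega)
end

section
/- Any finite family of vectors u_1, ..., u_m in ℝ^d satisfying ⟨u_i, u_j⟩ < 0 for all i ≠ j has at most d + 1 elements, i.e., m ≤ d + 1. -/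
/-!
Fix one vector `w` of the family; the others are linearly independent, so there are at most `d`
of them. Given a relation `∑ cᵢ uᵢ = 0`, move the negative coefficients to the other side to get
`x = ∑ cᵢ⁺ uᵢ = ∑ cᵢ⁻ uᵢ`. Then `⟪x, x⟫ = ∑ cᵢ⁺ cⱼ⁻ ⟪uᵢ, uⱼ⟫ ≤ 0`, as only terms with `i ≠ j`
survive, so `x = 0`; pairing `∑ cᵢ⁺ uᵢ = 0` and `∑ cᵢ⁻ uᵢ = 0` with `w` then forces every
`cᵢ⁺` and `cᵢ⁻` to vanish.
-/

open scoped RealInnerProductSpace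

theorem posPart_mul_negPart {R : Type*} [Ring R] [LinearOrder R] [AddLeftMono R] (a : R) :
    a⁺ * a⁻ = 0 := by
  rcases le_total a 0 with ha | ha
  · rw [posPart_eq_zero.2 ha, zero_mul]
  · rw [negPart_eq_zero.2 ha, mul_zero]

section ObtuseFamily

variable {ι E : Type*} [Fintype ι] [NormedAddCommGroup E] [InnerProductSpace ℝ E]

theorem eq_zero_of_sum_smul_eq_zero_of_inner_neg {v : ι → E} {w : E}
    (hw : ∀ i, ⟪v i, w⟫ < 0) {a : ι → ℝ} (ha : ∀ i, 0 ≤ a i) (hsum : ∑ i, a i • v i = 0)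
    (i : ι) : a i = 0 := by
  have hterm : ∀ j ∈ Finset.univ, a j * ⟪v j, w⟫ ≤ 0 :=
    fun j _ => mul_nonpos_of_nonneg_of_nonpos (ha j) (hw j).le
  have hzero : ∑ j, a j * ⟪v j, w⟫ = 0 := by
    simpa only [sum_inner, real_inner_smul_left, inner_zero_left] using congrArg (⟪·, w⟫) hsum
  have := (Finset.sum_eq_zero_iff_of_nonpos hterm).1 hzero i (Finset.mem_univ i)
  exact (mul_eq_zero.1 this).resolve_right (hw i).ne

theorem inner_sum_posPart_smul_sum_negPart_smul_nonpos {v : ι → E}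
    (hv : Pairwise fun i j => ⟪v i, v j⟫ ≤ 0) (c : ι → ℝ) :
    ⟪∑ i, (c i)⁺ • v i, ∑ j, (c j)⁻ • v j⟫ ≤ 0 := by
  simp only [sum_inner, inner_sum, real_inner_smul_left, real_inner_smul_right]
  refine Finset.sum_nonpos fun i _ => Finset.sum_nonpos fun j _ => ?_
  obtain rfl | hij := eq_or_ne i j
  · rw [← mul_assoc, mul_comm (c i)⁻, posPart_mul_negPart, zero_mul]
  · exact mul_nonpos_of_nonneg_of_nonpos (negPart_nonneg _)
      (mul_nonpos_of_nonneg_of_nonpos (posPart_nonneg _) (hv hij.symm))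

theorem linearIndependent_of_pairwise_inner_nonpos_of_inner_neg {v : ι → E} {w : E}
    (hv : Pairwise fun i j => ⟪v i, v j⟫ ≤ 0) (hw : ∀ i, ⟪v i, w⟫ < 0) :
    LinearIndependent ℝ v := by
  refine Fintype.linearIndependent_iff.2 fun c hc => ?_
  have hsplit : ∑ i, (c i)⁺ • v i = ∑ i, (c i)⁻ • v i := by
    rw [← sub_eq_zero, ← Finset.sum_sub_distrib]
    simpa only [← sub_smul, posPart_sub_negPart] using hc
  have hpos : ∑ i, (c i)⁺ • v i = 0 := by
    refine inner_self_eq_zero.1 (le_antisymm ?_ real_inner_self_nonneg)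
    simpa only [← hsplit] using inner_sum_posPart_smul_sum_negPart_smul_nonpos hv c
  have hneg : ∑ i, (c i)⁻ • v i = 0 := hsplit ▸ hpos
  intro i
  rw [← posPart_sub_negPart (c i),
    eq_zero_of_sum_smul_eq_zero_of_inner_neg hw (fun j => posPart_nonneg (c j)) hpos i,
    eq_zero_of_sum_smul_eq_zero_of_inner_neg hw (fun j => negPart_nonneg (c j)) hneg i, sub_zero]

theorem card_le_finrank_add_one_of_pairwise_inner_neg [FiniteDimensional ℝ E] {v : ι → E}
    (hv : Pairwise fun i j => ⟪v i, v j⟫ < 0) : Fintype.card ι ≤ Module.finrank ℝ E + 1 := by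
  classical
  rcases isEmpty_or_nonempty ι with _ | ⟨⟨i₀⟩⟩
  · simp
  have hind : LinearIndependent ℝ fun i : {i // i ≠ i₀} => v i :=
    linearIndependent_of_pairwise_inner_nonpos_of_inner_neg (w := v i₀)
      (fun i j hij => (hv (Subtype.coe_injective.ne hij)).le) (fun i => hv i.2)
  have := hind.fintype_card_le_finrank
  rw [Fintype.card_subtype_compl, Fintype.card_subtype_eq] at this
  omega

end ObtuseFamily

/-- Any family of `m` vectors in `ℝ^d` with pairwise strictly negative inner
products satisfies `m ≤ d + 1` (Lemma 8 of Rankin). -/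
theorem card_le_of_pairwise_inner_neg {d m : ℕ} (u : Fin m → EuclideanSpace ℝ (Fin d))
    (h : ∀ i j : Fin m, i ≠ j → ⟪u i, u j⟫ < 0) :
    m ≤ d + 1 := by
  simpa using card_le_finrank_add_one_of_pairwise_inner_neg (v := u) fun i j => h i j
end

section
/- Suppose a partition P of {1, ..., n} maximizes the vector-partition objective ∑_{B ∈ P} ‖S_B‖² (with respect to vectors v_1, ..., v_n ∈ ℝ^d). If index i lies in block B of P and B' is any other block of P, then ⟨v_i, S_B⟩ ≥ ⟨v_i, S_{B'}⟩ + ‖v_i‖²; in particular, every vector is at least as similar (in inner product) to the sum point of its own block as to the sum point of any other block. -/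
open Finset
open scoped RealInnerProductSpace

/-- In a partition maximizing the vector-partition objective, every vector satisfies
`⟪v i, S_B⟫ ≥ ⟪v i, S_{B'}⟫ + ‖v i‖²` where `B` is its own block and `B'` any other
block; in particular each vector is at least as similar to its own sum point as to
any other sum point. -/
theorem inner_own_sumPoint_ge_of_max {n d : ℕ} (v : Fin n → EuclideanSpace ℝ (Fin d))
    (P : Finpartition (Finset.univ : Finset (Fin n)))
    (hP : ∀ Q : Finpartition (Finset.univ : Finset (Fin n)), vpObj v Q ≤ vpObj v P)
    (i : Fin n) (B B' : Finset (Fin n)) (hB : B ∈ P.parts) (hB' : B' ∈ P.parts)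
    (hiB : i ∈ B) (hBB' : B ≠ B') :
    ⟪v i, ∑ j ∈ B, v j⟫ ≥ ⟪v i, ∑ j ∈ B', v j⟫ + ‖v i‖ ^ 2 := by
  classical
  set A : Finset (Fin n) := B.erase i with hA
  set C : Finset (Fin n) := insert i B' with hC
  set parts0 : Finset (Finset (Fin n)) := (P.parts.erase B).erase B' with hp0
  set F : Finset (Finset (Fin n)) := if A = ∅ then ∅ else {A} with hF
  have hp0sub : parts0 ⊆ P.parts := (erase_subset _ _).trans (erase_subset _ _)
  have hdisj : ∀ D E : Finset (Fin n), D ∈ P.parts → E ∈ P.parts → D ≠ E →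
      Disjoint D E := fun D E hD hE hne => P.disjoint hD hE hne
  have hiB' : i ∉ B' := fun h => (hdisj B B' hB hB' hBB').forall_ne_finset hiB h rfl
  have hiA : i ∉ A := notMem_erase _ _
  have hAsub : A ⊆ B := erase_subset _ _
  have hmemF : ∀ D ∈ F, D = A ∧ A ≠ ∅ := by
    intro D hD
    by_cases h : A = ∅
    · simp [hF, h] at hD
    · simp [hF, h] at hD; exact ⟨hD, h⟩
  have hp0mem : ∀ D ∈ parts0, D ∈ P.parts ∧ D ≠ B ∧ D ≠ B' := by
    intro D hD
    obtain ⟨hDB', hD2⟩ := mem_erase.1 hD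
    obtain ⟨hDB, hD3⟩ := mem_erase.1 hD2
    exact ⟨hD3, hDB, hDB'⟩
  have hCp0 : C ∉ parts0 := by
    intro h
    obtain ⟨hCP, hCB, _⟩ := hp0mem C h
    exact (hdisj C B hCP hB hCB).forall_ne_finset (mem_insert_self i B') hiB rfl
  have hAp0 : ∀ D ∈ F, D ∉ parts0 := by
    intro D hD hDp0
    obtain ⟨rfl, hAne⟩ := hmemF D hD
    obtain ⟨hDP, hDB, _⟩ := hp0mem A hDp0
    have hAA : Disjoint A A := (hdisj A B hDP hB hDB).mono_right hAsub
    exact hAne (by simpa using disjoint_self.1 hAA)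
  have hCF : C ∉ F := fun h => hiA ((hmemF C h).1 ▸ mem_insert_self i B')
  -- disjointness of the union pieces as finsets of finsets
  have hCp0F : C ∉ parts0 ∪ F := by simp [hCp0, hCF]
  have hp0F : Disjoint parts0 F := by
    rw [disjoint_right]; intro D hD; exact fun h => hAp0 D hD h
  -- build the modified partition
  have hDisjAll : ∀ D ∈ insert C (parts0 ∪ F), ∀ E ∈ insert C (parts0 ∪ F),
      D ≠ E → Disjoint D E := by
    intro D hD E hE hne
    simp only [mem_insert, mem_union] at hD hE
    have hkey : ∀ X, X ∈ parts0 ∪ F → Disjoint C X := by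
      intro X hX
      simp only [mem_union] at hX
      rcases hX with hX | hX
      · obtain ⟨hXP, hXB, hXB'⟩ := hp0mem X hX
        rw [hC, disjoint_insert_left]
        exact ⟨fun h => (hdisj X B hXP hB hXB).forall_ne_finset h hiB rfl,
          hdisj B' X hB' hXP (Ne.symm hXB')⟩
      · obtain ⟨rfl, _⟩ := hmemF X hX
        rw [hC, disjoint_insert_left]
        exact ⟨hiA, (hdisj B' B hB' hB (Ne.symm hBB')).mono_right hAsub⟩
    have haux : ∀ X Y, X ∈ parts0 ∪ F → Y ∈ parts0 ∪ F → X ≠ Y → Disjoint X Y := by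
      intro X Y hX hY hxy
      simp only [mem_union] at hX hY
      rcases hX with hX | hX <;> rcases hY with hY | hY
      · exact hdisj X Y (hp0mem X hX).1 (hp0mem Y hY).1 hxy
      · obtain ⟨rfl, _⟩ := hmemF Y hY
        exact ((hdisj X B (hp0mem X hX).1 hB (hp0mem X hX).2.1).mono_right hAsub)
      · obtain ⟨rfl, _⟩ := hmemF X hX
        exact ((hdisj Y B (hp0mem Y hY).1 hB (hp0mem Y hY).2.1).mono_right hAsub).symm
      · obtain ⟨rfl, _⟩ := hmemF X hX
        obtain ⟨h2, _⟩ := hmemF Y hY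
        exact absurd h2.symm hxy
    rcases hD with rfl | hD <;> rcases hE with rfl | hE
    · exact absurd rfl hne
    · exact hkey E (by simpa using hE)
    · exact (hkey D (by simpa using hD)).symm
    · exact haux D E (by simpa using hD) (by simpa using hE) hne
  have hsup : (insert C (parts0 ∪ F)).sup id = (Finset.univ : Finset (Fin n)) := by
    apply le_antisymm (by simp)
    intro x _
    rw [mem_sup]
    obtain ⟨D, hD, hxD⟩ := P.exists_mem (mem_univ x)
    by_cases hDB : D = B
    · subst hDB
      by_cases hxi : x = i
      · exact ⟨C, mem_insert_self _ _, by simp [hC, hxi]⟩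
      · refine ⟨A, ?_, mem_erase.2 ⟨hxi, hxD⟩⟩
        have hAne : A ≠ ∅ := Finset.ne_empty_of_mem (a := x) (by
          rw [hA]; exact mem_erase.2 ⟨hxi, hxD⟩)
        simp [hF, hAne]
    · by_cases hDB' : D = B'
      · exact ⟨C, mem_insert_self _ _, by subst hDB'; simp [hC, hxD]⟩
      · refine ⟨D, ?_, hxD⟩
        simp only [mem_insert, mem_union]
        exact Or.inr (Or.inl (mem_erase.2 ⟨hDB', mem_erase.2 ⟨hDB, hD⟩⟩))
  have hnotbot : (⊥ : Finset (Fin n)) ∉ insert C (parts0 ∪ F) := by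
    simp only [mem_insert, mem_union, bot_eq_empty]
    rintro (h | h | h)
    · exact (Finset.insert_ne_empty i B') (hC ▸ h.symm)
    · exact P.bot_notMem (hp0sub h)
    · obtain ⟨h1, h2⟩ := hmemF ∅ h; exact h2 h1.symm
  let Q : Finpartition (Finset.univ : Finset (Fin n)) :=
    ⟨insert C (parts0 ∪ F), Finset.supIndep_iff_pairwiseDisjoint.2
      (fun D hD E hE hne => hDisjAll D hD E hE hne), hsup, hnotbot⟩
  -- compute objectives
  have f := fun (D : Finset (Fin n)) => ‖∑ j ∈ D, v j‖ ^ 2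
  have hsumF : ∑ D ∈ F, ‖∑ j ∈ D, v j‖ ^ 2 = ‖∑ j ∈ A, v j‖ ^ 2 := by
    by_cases h : A = ∅
    · simp [hF, h]
    · simp [hF, h]
  have hQobj : vpObj v Q = ‖∑ j ∈ C, v j‖ ^ 2 + ‖∑ j ∈ A, v j‖ ^ 2 +
      ∑ D ∈ parts0, ‖∑ j ∈ D, v j‖ ^ 2 := by
    show ∑ D ∈ insert C (parts0 ∪ F), ‖∑ j ∈ D, v j‖ ^ 2 = _
    rw [sum_insert hCp0F, sum_union hp0F, hsumF]; ring
  have hPobj : vpObj v P = ‖∑ j ∈ B, v j‖ ^ 2 + ‖∑ j ∈ B', v j‖ ^ 2 +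
      ∑ D ∈ parts0, ‖∑ j ∈ D, v j‖ ^ 2 := by
    unfold vpObj
    rw [← Finset.add_sum_erase _ _ hB, ← Finset.add_sum_erase _ _
      (mem_erase.2 ⟨Ne.symm hBB', hB'⟩)]
    ring
  have hSC : ∑ j ∈ C, v j = v i + ∑ j ∈ B', v j := sum_insert hiB'
  have hSA : ∑ j ∈ A, v j = ∑ j ∈ B, v j - v i := by
    rw [hA, Finset.sum_erase_eq_sub hiB]
  have hle := hP Q
  rw [hQobj, hPobj, hSC, hSA] at hle
  have e1 : ‖(∑ j ∈ B, v j) - v i‖ ^ 2 = ‖∑ j ∈ B, v j‖ ^ 2 -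
      2 * ⟪v i, ∑ j ∈ B, v j⟫ + ‖v i‖ ^ 2 := by
    rw [norm_sub_sq_real, real_inner_comm]
    try ring
  have e2 : ‖v i + ∑ j ∈ B', v j‖ ^ 2 = ‖v i‖ ^ 2 +
      2 * ⟪v i, ∑ j ∈ B', v j⟫ + ‖∑ j ∈ B', v j‖ ^ 2 := by
    rw [norm_add_sq_real]
    try ring
  rw [e1, e2] at hle
  linarith
end

section
/- Suppose a partition P of {1, ..., n} maximizes the vector-partition objective ∑_{B ∈ P} ‖S_B‖² (with respect to vectors v_1, ..., v_n ∈ ℝ^d). Let indices x_1, ..., x_k all lie in the same block B of P, and suppose index y satisfies v_y = ∑_{i=1}^k c_i v_{x_i} with all c_i ≥ 0, where c_j > 0 and v_{x_j} ≠ 0 for at least one j. Then y also lies in block B. In other words, in an optimal partition each block is closed under nonnegative (conic) combinations realized by other data points, so the blocks lie in distinct convex cones. -/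
open Finset
open scoped RealInnerProductSpace

lemma move_ineq {n d : ℕ} (v : Fin n → EuclideanSpace ℝ (Fin d))
    (P : Finpartition (Finset.univ : Finset (Fin n)))
    (hP : ∀ Q : Finpartition (Finset.univ : Finset (Fin n)), vpObj v Q ≤ vpObj v P)
    (z : Fin n) (C : Finset (Fin n)) (hC : C ∈ P.parts) (hz : z ∉ C) :
    ⟪v z, ∑ i ∈ C, v i⟫ + ‖v z‖ ^ 2 ≤ ⟪v z, ∑ i ∈ P.part z, v i⟫ := by
  classical
  set A := P.part z with hA
  have hAmem : A ∈ P.parts := P.part_mem.2 (mem_univ z)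
  have hzA : z ∈ A := P.mem_part (mem_univ z)
  have hAC : A ≠ C := fun h => hz (h ▸ hzA)
  set f : Fin n → Finset (Fin n) := fun i => if i = z then C else P.part i with hf
  letI : DecidableRel (Setoid.ker f).r := fun a b => decEq (f a) (f b)
  set Q := Finpartition.ofSetoid (Setoid.ker f) with hQ
  have hparts : Q.parts = univ.image (fun a => univ.filter (fun b => f b = f a)) := by
    show univ.image _ = _
    apply image_congr
    intro a _
    ext b
    simp [Setoid.ker, eq_comm]
  have hmemf : ∀ i, f i ∈ P.parts := by
    intro i
    by_cases h : i = z <;> simp [hf, h, hC, P.part_mem.2 (mem_univ i)]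
  have keyz : f z = C := by simp [hf]
  have hfib : ∀ D ∈ P.parts, univ.filter (fun b => f b = D)
      = if D = C then insert z C else if D = A then A.erase z else D := by
    intro D hD
    have key : ∀ i, i ≠ z → (f i = D ↔ i ∈ D) := by
      intro i hi
      simp only [hf, if_neg hi]
      exact ⟨fun h => h ▸ P.mem_part (mem_univ i), fun h => P.part_eq_of_mem hD h⟩
    by_cases hDC : D = C
    · subst hDC
      rw [if_pos rfl]
      ext i
      simp only [mem_filter, mem_univ, true_and, mem_insert]
      by_cases h : i = z
      · subst h; simp [keyz]
      · rw [key i h]; simp [h]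
    · rw [if_neg hDC]
      by_cases hDA : D = A
      · subst hDA
        rw [if_pos rfl]
        ext i
        simp only [mem_filter, mem_univ, true_and, mem_erase]
        by_cases h : i = z
        · subst h
          rw [keyz]
          simp [Ne.symm hAC]
        · rw [key i h]; simp [h]
      · rw [if_neg hDA]
        ext i
        simp only [mem_filter, mem_univ, true_and]
        by_cases h : i = z
        · subst h
          rw [keyz]
          constructor
          · intro hCD; exact absurd hCD.symm hDC
          · intro hzD; exact absurd (P.part_eq_of_mem hD hzD).symm hDA
        · exact key i h
  have hinj : ∀ b1 ∈ univ.image f, ∀ b2 ∈ univ.image f,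
      univ.filter (fun i => f i = b1) = univ.filter (fun i => f i = b2) → b1 = b2 := by
    intro b1 hb1 b2 hb2 h
    obtain ⟨a1, _, rfl⟩ := mem_image.1 hb1
    have : a1 ∈ univ.filter (fun i => f i = b2) := by
      rw [← h]; simp
    simpa using (mem_filter.1 this).2
  have hQobj : vpObj v Q = ∑ D ∈ P.parts, ‖∑ i ∈ univ.filter (fun b => f b = D), v i‖ ^ 2 := by
    rw [vpObj, hparts]
    have himg : univ.image (fun a => univ.filter (fun b => f b = f a))
        = (univ.image f).image (fun D => univ.filter (fun b => f b = D)) := by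
      rw [image_image]
      rfl
    rw [himg, sum_image hinj]
    apply sum_subset
    · intro b hb
      obtain ⟨a, _, rfl⟩ := mem_image.1 hb
      exact hmemf a
    · intro D hD hD'
      have : univ.filter (fun b => f b = D) = ∅ := by
        rw [filter_eq_empty_iff]
        intro i _
        exact fun h => hD' (h ▸ mem_image_of_mem f (mem_univ i))
      rw [this]
      simp
  have hle := hP Q
  rw [hQobj, vpObj] at hle
  have hCA : C ∈ P.parts.erase A := mem_erase.2 ⟨Ne.symm hAC, hC⟩
  have split : ∀ g : Finset (Fin n) → ℝ, ∑ D ∈ P.parts, g D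
      = g A + (g C + ∑ D ∈ (P.parts.erase A).erase C, g D) := by
    intro g
    rw [← Finset.add_sum_erase _ g hAmem, ← Finset.add_sum_erase _ g hCA]
  rw [split, split] at hle
  have hrest : ∑ D ∈ (P.parts.erase A).erase C, ‖∑ i ∈ univ.filter (fun b => f b = D), v i‖ ^ 2
      = ∑ D ∈ (P.parts.erase A).erase C, ‖∑ i ∈ D, v i‖ ^ 2 := by
    apply sum_congr rfl
    intro D hD
    obtain ⟨hDC, hD'⟩ := mem_erase.1 hD
    obtain ⟨hDA, hD''⟩ := mem_erase.1 hD'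
    rw [hfib D hD'', if_neg hDC, if_neg hDA]
  rw [hrest] at hle
  rw [hfib A hAmem, if_neg hAC, if_pos rfl, hfib C hC, if_pos rfl] at hle
  have key : ‖∑ i ∈ A.erase z, v i‖ ^ 2 + ‖∑ i ∈ insert z C, v i‖ ^ 2
      ≤ ‖∑ i ∈ A, v i‖ ^ 2 + ‖∑ i ∈ C, v i‖ ^ 2 := by linarith
  have hsumA : ∑ i ∈ A, v i = v z + ∑ i ∈ A.erase z, v i :=
    (Finset.add_sum_erase _ v hzA).symm
  have hsumC : ∑ i ∈ insert z C, v i = v z + ∑ i ∈ C, v i := sum_insert hz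
  rw [hsumA, hsumC] at key
  rw [hsumA]
  set a := ∑ i ∈ A.erase z, v i
  set b := ∑ i ∈ C, v i
  rw [norm_add_sq_real (v z) a, norm_add_sq_real (v z) b] at key
  rw [inner_add_right, real_inner_self_eq_norm_sq]
  linarith
/-- In a partition maximizing the vector-partition objective, each block is closed
under nonnegative (conic) combinations realized by other data points: if the points
indexed by `x 1, ..., x k` all lie in block `B` and `v y = ∑ i, c i • v (x i)` with
all `c i ≥ 0` and some `c j > 0` with `v (x j) ≠ 0`, then `y ∈ B` as well
(Theorem 2 of the paper). -/
theorem mem_block_of_conic_combination {n d k : ℕ}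
    (v : Fin n → EuclideanSpace ℝ (Fin d))
    (P : Finpartition (Finset.univ : Finset (Fin n)))
    (hP : ∀ Q : Finpartition (Finset.univ : Finset (Fin n)), vpObj v Q ≤ vpObj v P)
    (B : Finset (Fin n)) (hB : B ∈ P.parts)
    (x : Fin k → Fin n) (hx : ∀ i, x i ∈ B)
    (c : Fin k → ℝ) (hc : ∀ i, 0 ≤ c i)
    (hj : ∃ j, 0 < c j ∧ v (x j) ≠ 0)
    (y : Fin n) (hy : v y = ∑ i, c i • v (x i)) :
    y ∈ B := by
  by_contra hyB
  obtain ⟨j, hcj, hvj⟩ := hj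
  set A := P.part y with hA
  have hAmem : A ∈ P.parts := P.part_mem.2 (mem_univ y)
  have hyA : y ∈ A := P.mem_part (mem_univ y)
  have hAB : A ≠ B := fun h => hyB (h ▸ hyA)
  have h1 : ⟪v y, ∑ i ∈ B, v i⟫ + ‖v y‖ ^ 2 ≤ ⟪v y, ∑ i ∈ A, v i⟫ :=
    move_ineq v P hP y B hB hyB
  have hpartx : ∀ i, P.part (x i) = B := fun i => P.part_eq_of_mem hB (hx i)
  have hxA : ∀ i, x i ∉ A := fun i h => hAB (P.eq_of_mem_parts hAmem hB h (hx i))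
  have h2 : ∀ i, ⟪v (x i), ∑ t ∈ A, v t⟫ + ‖v (x i)‖ ^ 2 ≤ ⟪v (x i), ∑ t ∈ B, v t⟫ := by
    intro i
    have := move_ineq v P hP (x i) A hAmem (hxA i)
    rwa [hpartx i] at this
  have expand : ∀ S : Finset (Fin n), ⟪v y, ∑ t ∈ S, v t⟫
      = ∑ i, c i * ⟪v (x i), ∑ t ∈ S, v t⟫ := by
    intro S
    rw [hy, sum_inner]
    exact Finset.sum_congr rfl fun i _ => real_inner_smul_left _ _ _
  have hsum : ∑ i, c i * ⟪v (x i), ∑ t ∈ A, v t⟫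
      ≤ ∑ i, c i * (⟪v (x i), ∑ t ∈ B, v t⟫ - ‖v (x i)‖ ^ 2) := by
    apply sum_le_sum
    intro i _
    exact mul_le_mul_of_nonneg_left (by linarith [h2 i]) (hc i)
  have hsplit : ∑ i, c i * (⟪v (x i), ∑ t ∈ B, v t⟫ - ‖v (x i)‖ ^ 2)
      = ∑ i, c i * ⟪v (x i), ∑ t ∈ B, v t⟫ - ∑ i, c i * ‖v (x i)‖ ^ 2 := by
    rw [← Finset.sum_sub_distrib]
    exact Finset.sum_congr rfl fun i _ => by ring
  have hT : 0 < ∑ i, c i * ‖v (x i)‖ ^ 2 := by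
    have hle : c j * ‖v (x j)‖ ^ 2 ≤ ∑ i, c i * ‖v (x i)‖ ^ 2 :=
      Finset.single_le_sum (f := fun i => c i * ‖v (x i)‖ ^ 2)
        (fun i _ => mul_nonneg (hc i) (sq_nonneg _)) (mem_univ j)
    have hpos : 0 < c j * ‖v (x j)‖ ^ 2 :=
      mul_pos hcj (pow_pos (norm_pos_iff.2 hvj) 2)
    linarith
  have e1 := expand A
  have e2 := expand B
  have hnn : (0:ℝ) ≤ ‖v y‖ ^ 2 := sq_nonneg _
  linarith
end

section
/- Let a_1, ..., a_n be positive integers with smallest element s and total sum B, where s and B are both even, and let M = B/2 − s/2. If there exists a subset T ⊆ {1, ..., n} with ∑_{i ∈ T} a_i = B/2, then the multiset {a_1, ..., a_n, −M, −M} can be partitioned into two parts, each containing exactly one copy of −M, such that each part sums to s/2; consequently the minimum over all partitions of this multiset of the sum of squared part sums is at most s²/2. -/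
open Finset

/-- The ground multiset of the reduction: the positive integers `a 1, ..., a n`
(as real numbers) together with two copies of `-M`. -/
noncomputable def ground {n : ℕ} (a : Fin n → ℤ) (M : ℝ) : Multiset ℝ :=
  (Finset.univ.val.map (fun i => ((a i : ℤ) : ℝ))) + Multiset.replicate 2 (-M)

/-- `parts` is a partition of the multiset `S` into nonempty parts. -/
def IsPartitionOf (parts : Multiset (Multiset ℝ)) (S : Multiset ℝ) : Prop :=
  parts.sum = S ∧ (0 : Multiset ℝ) ∉ parts

/-- The RONE-CC objective: the sum of the squares of the part sums. -/
noncomputable def roneObj (parts : Multiset (Multiset ℝ)) : ℝ :=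
  (parts.map (fun C => C.sum ^ 2)).sum


/-!
Take the parts `T ∪ {-M}` and `Tᶜ ∪ {-M}`: each sums to `B/2 - M = s/2`. Since `s ≤ a i ≤ B`,
`-M ≤ 0 < a i`, so `-M` is none of the `a i` and each part holds exactly one copy of it. The
objective of this two-part partition is `2 (s/2)² = s²/2`.
-/

def splitPart {ι α : Type*} (f : ι → α) (x : α) (T : Finset ι) : Multiset α :=
  x ::ₘ T.val.map f

section SplitPart

variable {ι α : Type*} (f : ι → α) (x : α) (T : Finset ι)

theorem splitPart_add_splitPart_compl [Fintype ι] [DecidableEq ι] :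
    splitPart f x T + splitPart f x Tᶜ = univ.val.map f + Multiset.replicate 2 x := by
  have hval : T.val + Tᶜ.val = (univ : Finset ι).val := by
    rw [← union_compl T, ← disjUnion_eq_union T Tᶜ disjoint_compl_right]
    rfl
  rw [splitPart, splitPart, ← hval, Multiset.map_add, Multiset.cons_add, Multiset.add_cons]
  simp only [Multiset.replicate_succ, Multiset.replicate_zero, Multiset.add_cons, add_zero]

theorem splitPart_ne_zero : splitPart f x T ≠ 0 :=
  Multiset.cons_ne_zero

theorem count_splitPart [DecidableEq α] {f : ι → α} {x : α} (hx : x ∉ Set.range f) :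
    (splitPart f x T).count x = 1 := by
  rw [splitPart, Multiset.count_cons_self, Multiset.count_eq_zero.mpr]
  exact fun hmem => hx ((Multiset.mem_map.mp hmem).imp fun _ => And.right)

theorem sum_splitPart [AddCommMonoid α] : (splitPart f x T).sum = x + ∑ i ∈ T, f i := by
  rw [splitPart, Multiset.sum_cons]
  rfl

end SplitPart

theorem Finset.two_mul_sum_compl_of_two_mul_sum {ι R : Type*} [Fintype ι] [DecidableEq ι]
    [CommRing R] {f : ι → R} {T : Finset ι} (h : 2 * ∑ i ∈ T, f i = ∑ i, f i) :
    2 * ∑ i ∈ Tᶜ, f i = ∑ i, f i := by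
  linear_combination 2 * sum_add_sum_compl T f - h

theorem isPartitionOf_pair {C₁ C₂ : Multiset ℝ} (h₁ : C₁ ≠ 0) (h₂ : C₂ ≠ 0) :
    IsPartitionOf {C₁, C₂} (C₁ + C₂) :=
  ⟨by simp, by simp [eq_comm, h₁, h₂]⟩

theorem roneObj_pair (C₁ C₂ : Multiset ℝ) : roneObj {C₁, C₂} = C₁.sum ^ 2 + C₂.sum ^ 2 := by
  simp [roneObj]

theorem exists_balanced_two_partition_general {n : ℕ} (a : Fin n → ℤ) (s B : ℤ) (M : ℝ)
    (hpos : ∀ i, 0 < a i) (hsle : ∀ i, s ≤ a i)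
    (hB : B = ∑ i, a i) (hBeven : Even B)
    (hM : M = (B : ℝ) / 2 - (s : ℝ) / 2)
    (hT : ∃ T : Finset (Fin n), ∑ i ∈ T, a i = B / 2) :
    (∃ C₁ C₂ : Multiset ℝ,
      C₁ + C₂ = ground a M ∧
      C₁.count (-M) = 1 ∧ C₂.count (-M) = 1 ∧
      C₁.sum = (s : ℝ) / 2 ∧ C₂.sum = (s : ℝ) / 2) ∧
    ∃ parts : Multiset (Multiset ℝ),
      IsPartitionOf parts (ground a M) ∧ roneObj parts ≤ (s : ℝ) ^ 2 / 2 := by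
  obtain ⟨T, hT⟩ := hT
  set f : Fin n → ℝ := fun i => (a i : ℝ)
  have hhalf : 2 * ∑ i ∈ T, f i = ∑ i, f i := by
    have hZ : 2 * ∑ i ∈ T, a i = ∑ i, a i := by
      rw [hT, ← hB]
      exact Int.mul_ediv_cancel' hBeven.two_dvd
    simp only [f]
    exact_mod_cast hZ
  have hx : -M ∉ Set.range f := by
    rintro ⟨i, hi⟩
    have hsB : s ≤ B := (hsle i).trans (hB ▸ single_le_sum (fun j _ => (hpos j).le) (mem_univ i))
    have hai : (0 : ℝ) < a i := by exact_mod_cast hpos i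
    have hsB' : (s : ℝ) ≤ B := by exact_mod_cast hsB
    simp only [f] at hi
    linarith
  have hsum {U : Finset (Fin n)} (hU : 2 * ∑ i ∈ U, f i = ∑ i, f i) :
      (splitPart f (-M) U).sum = s / 2 := by
    rw [sum_splitPart, hM, hB]
    push_cast
    linear_combination hU / 2
  have hcompl := two_mul_sum_compl_of_two_mul_sum hhalf
  have hground := splitPart_add_splitPart_compl f (-M) T
  refine ⟨⟨_, _, hground, count_splitPart T hx, count_splitPart Tᶜ hx, hsum hhalf, hsum hcompl⟩,
    _, hground ▸ isPartitionOf_pair (splitPart_ne_zero _ _ _) (splitPart_ne_zero _ _ _), ?_⟩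
  rw [roneObj_pair, hsum hhalf, hsum hcompl]
  exact le_of_eq (by ring)

/-- If the positive integers `a i` (smallest element `s`, total sum `B`, both even)
admit a subset summing to `B/2`, then with `M = B/2 - s/2` the multiset
`{a 1, ..., a n, -M, -M}` splits into two parts, each containing exactly one copy of
`-M` and each summing to `s/2`; consequently the minimum RONE-CC objective is at
most `s²/2`. -/
theorem exists_balanced_two_partition {n : ℕ} (a : Fin n → ℤ) (s B : ℤ) (M : ℝ)
    (hpos : ∀ i, 0 < a i) (hsmem : ∃ i, a i = s) (hsle : ∀ i, s ≤ a i)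
    (hB : B = ∑ i, a i) (hseven : Even s) (hBeven : Even B)
    (hM : M = (B : ℝ) / 2 - (s : ℝ) / 2)
    (hT : ∃ T : Finset (Fin n), ∑ i ∈ T, a i = B / 2) :
    (∃ C₁ C₂ : Multiset ℝ,
      C₁ + C₂ = ground a M ∧
      C₁.count (-M) = 1 ∧ C₂.count (-M) = 1 ∧
      C₁.sum = (s : ℝ) / 2 ∧ C₂.sum = (s : ℝ) / 2) ∧
    ∃ parts : Multiset (Multiset ℝ),
      IsPartitionOf parts (ground a M) ∧ roneObj parts ≤ (s : ℝ) ^ 2 / 2 :=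
  exists_balanced_two_partition_general a s B M hpos hsle hB hBeven hM hT
end

section
/- Let a_1, ..., a_n be positive integers with total sum B, let s be even with s ≤ B, and let M = B/2 − s/2. For any partition of the multiset {a_1, ..., a_n, −M, −M} into exactly two parts, each containing one copy of −M, if the positive integers appearing in the first part sum to a, then the sum of squared part sums equals s²/2 + 2(a − B/2)². In particular it is at least s²/2, with equality if and only if a = B/2. -/
open Finset

/-! Both parts sum to `s/2 ± (α - B/2)`, since the ground set sums to `B - 2M = s`; the
formula is then the parallelogram identity `x² + y² = (x + y)²/2 + (x - y)²/2`. -/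

theorem Multiset.sum_eq_sum_filter_ne_add_count_nsmul {β : Type*} [AddCommMonoid β]
    [DecidableEq β] (C : Multiset β) (x : β) :
    C.sum = (C.filter (· ≠ x)).sum + C.count x • x := by
  conv_lhs => rw [← Multiset.filter_add_not (· ≠ x) C]
  simp only [not_not, Multiset.sum_add, Multiset.filter_eq', Multiset.sum_replicate]

theorem ground_sum {n : ℕ} (a : Fin n → ℤ) (M : ℝ) :
    (ground a M).sum = ((∑ i, a i : ℤ) : ℝ) - 2 * M := by
  rw [ground, Multiset.sum_add, Multiset.sum_replicate, Int.cast_sum, Finset.sum_eq_multiset_sum,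
    two_nsmul]
  ring

theorem sq_add_sq_eq_of_add_eq {K : Type*} [Field K] [NeZero (2 : K)] {x y s : K}
    (h : x + y = s) : x ^ 2 + y ^ 2 = s ^ 2 / 2 + 2 * (x - s / 2) ^ 2 := by
  subst h
  field_simp
  ring

theorem roneObj_two_part_formula_general {n : ℕ} (a : Fin n → ℤ) (s B : ℤ) (M α : ℝ)
    (hB : B = ∑ i, a i)
    (hM : M = (B : ℝ) / 2 - (s : ℝ) / 2)
    (C₁ C₂ : Multiset ℝ) (hsplit : C₁ + C₂ = ground a M)
    (h₁ : C₁.count (-M) = 1)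
    (hα : (C₁.filter (fun x => x ≠ -M)).sum = α) :
    C₁.sum ^ 2 + C₂.sum ^ 2 = (s : ℝ) ^ 2 / 2 + 2 * (α - (B : ℝ) / 2) ^ 2 ∧
    (s : ℝ) ^ 2 / 2 ≤ C₁.sum ^ 2 + C₂.sum ^ 2 ∧
    (C₁.sum ^ 2 + C₂.sum ^ 2 = (s : ℝ) ^ 2 / 2 ↔ α = (B : ℝ) / 2) := by
  have hC₁ : C₁.sum = α - M := by
    rw [Multiset.sum_eq_sum_filter_ne_add_count_nsmul C₁ (-M), hα, h₁, one_nsmul, sub_eq_add_neg]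
  have htotal : C₁.sum + C₂.sum = s := by
    rw [← Multiset.sum_add, hsplit, ground_sum, ← hB, hM]
    ring
  have key : C₁.sum ^ 2 + C₂.sum ^ 2 = (s : ℝ) ^ 2 / 2 + 2 * (α - (B : ℝ) / 2) ^ 2 := by
    rw [sq_add_sq_eq_of_add_eq htotal, hC₁, hM]
    ring
  refine ⟨key, key ▸ le_add_of_nonneg_right (by positivity), ?_⟩
  rw [key, add_eq_left, mul_eq_zero, pow_eq_zero_iff two_ne_zero, sub_eq_zero,
    or_iff_right two_ne_zero]

/-- For a partition of `{a 1, ..., a n, -M, -M}` into exactly two parts, each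
containing one copy of `-M`, if the positive integers in the first part sum to `α`,
then the sum of squared part sums equals `s²/2 + 2(α - B/2)²`; in particular it is
at least `s²/2`, with equality iff `α = B/2`. -/
theorem roneObj_two_part_formula {n : ℕ} (a : Fin n → ℤ) (s B : ℤ) (M α : ℝ)
    (hpos : ∀ i, 0 < a i) (hB : B = ∑ i, a i) (hseven : Even s) (hsB : s ≤ B)
    (hM : M = (B : ℝ) / 2 - (s : ℝ) / 2)
    (C₁ C₂ : Multiset ℝ) (hsplit : C₁ + C₂ = ground a M)
    (h₁ : C₁.count (-M) = 1) (h₂ : C₂.count (-M) = 1)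
    (hα : (C₁.filter (fun x => x ≠ -M)).sum = α) :
    C₁.sum ^ 2 + C₂.sum ^ 2 = (s : ℝ) ^ 2 / 2 + 2 * (α - (B : ℝ) / 2) ^ 2 ∧
    (s : ℝ) ^ 2 / 2 ≤ C₁.sum ^ 2 + C₂.sum ^ 2 ∧
    (C₁.sum ^ 2 + C₂.sum ^ 2 = (s : ℝ) ^ 2 / 2 ↔ α = (B : ℝ) / 2) :=
  roneObj_two_part_formula_general a s B M α hB hM C₁ C₂ hsplit h₁ hα
end

section
/- Let a_1, ..., a_n be positive integers with smallest element s and total sum B, where s and B are both even and s > 0, and let M = B/2 − s/2. Then the minimum over all partitions of the multiset {a_1, ..., a_n, −M, −M} into nonempty parts of the sum of squared part sums equals s²/2 if and only if there exists a subset T ⊆ {1, ..., n} with ∑_{i ∈ T} a_i = B/2; otherwise the minimum is strictly greater than s²/2. -/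
open Finset

/-!
The ground multiset sums to `B - 2M = s`, its only nonpositive elements are the two copies
of `-M`, and all its other elements are at least `s`. So a part containing no copy of `-M`
already has squared sum at least `s²`. Otherwise each part contains a copy of `-M`, so there are
at most two parts; one part gives `s²`, and two parts `-M ::ₘ D`, `-M ::ₘ E` with `D + E`
the multiset of the `a i` give `x² + (s - x)² = 2 (x - s/2)² + s²/2` for `x = ∑ D - M`,
where `x - s/2 = ∑ D - B/2`. Conversely every subset `T` yields such a two-part partition.
-/

namespace Multiset

variable {α β : Type*}

theorem exists_le_map_eq_of_le_map {f : α → β} {s : Multiset β} {t : Multiset α}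
    (h : s ≤ t.map f) : ∃ u ≤ t, u.map f = s := by
  induction s using Quotient.inductionOn
  induction t using Quotient.inductionOn
  obtain ⟨l, hperm, hsub⟩ := h
  obtain ⟨l', hsub', rfl⟩ := List.sublist_map_iff.mp hsub
  exact ⟨l', hsub'.subperm, Quotient.sound hperm⟩

end Multiset

theorem Finset.exists_map_val_eq_of_le_map_val {ι β : Type*} {f : ι → β} {s : Finset ι}
    {D : Multiset β} (h : D ≤ s.val.map f) : ∃ T ⊆ s, T.val.map f = D := by
  obtain ⟨u, hu, rfl⟩ := Multiset.exists_le_map_eq_of_le_map h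
  exact ⟨⟨u, Multiset.nodup_of_le hu s.nodup⟩, Multiset.subset_of_le hu, rfl⟩

theorem sq_sum_le_roneObj {parts : Multiset (Multiset ℝ)} {C : Multiset ℝ} (hC : C ∈ parts) :
    C.sum ^ 2 ≤ roneObj parts :=
  Multiset.single_le_sum (by simp [sq_nonneg]) _ (Multiset.mem_map_of_mem _ hC)

theorem isPartitionOf_pair_s13 (D E : Multiset ℝ) (m : ℝ) :
    IsPartitionOf {m ::ₘ D, m ::ₘ E} (D + E + Multiset.replicate 2 m) := by
  refine ⟨?_, by simp [eq_comm, Multiset.cons_ne_zero]⟩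
  simp [Multiset.replicate_succ, ← Multiset.singleton_add]
  abel

namespace IsPartitionOf

variable {parts : Multiset (Multiset ℝ)} {S : Multiset ℝ}

theorem card_le_count {x : ℝ} (hp : IsPartitionOf parts S) (hx : ∀ C ∈ parts, x ∈ C) :
    Multiset.card parts ≤ S.count x := by
  have h := Multiset.card_nsmul_le_sum (s := parts.map (Multiset.count x)) (a := 1)
    (by simpa [Multiset.one_le_count_iff_mem] using hx)
  rw [← hp.1, ← Multiset.map_id' parts, Multiset.count_sum]
  simpa using h

variable {A : Multiset ℝ} {m s : ℝ}

theorem exists_subset_or_eq_singleton_or_eq_pair (hm : m ∉ A)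
    (hp : IsPartitionOf parts (A + Multiset.replicate 2 m)) :
    (∃ C ∈ parts, C ≠ 0 ∧ C ⊆ A) ∨ parts = {A + Multiset.replicate 2 m} ∨
      ∃ D E, D + E = A ∧ parts = {m ::ₘ D, m ::ₘ E} := by
  by_cases hall : ∀ C ∈ parts, m ∈ C
  · have hcard : Multiset.card parts ≤ 2 := by
      simpa [Multiset.count_eq_zero_of_notMem hm] using hp.card_le_count hall
    interval_cases h : Multiset.card parts
    · have := hp.1
      simp [Multiset.card_eq_zero.mp h] at this
    · obtain ⟨C, rfl⟩ := Multiset.card_eq_one.mp h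
      exact Or.inr (Or.inl (by simpa using hp.1))
    · obtain ⟨C₁, C₂, rfl⟩ := Multiset.card_eq_two.mp h
      obtain ⟨D, rfl⟩ := Multiset.exists_cons_of_mem (hall C₁ (by simp))
      obtain ⟨E, rfl⟩ := Multiset.exists_cons_of_mem (hall C₂ (by simp))
      exact Or.inr (Or.inr ⟨D, E, add_right_cancel ((isPartitionOf_pair_s13 D E m).1.symm.trans hp.1),
        rfl⟩)
  · push Not at hall
    obtain ⟨C, hC, hmC⟩ := hall
    refine Or.inl ⟨C, hC, fun h => hp.2 (h ▸ hC), fun x hx => ?_⟩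
    have hx' : x ∈ A + Multiset.replicate 2 m :=
      Multiset.mem_of_le (hp.1 ▸ Multiset.le_sum_of_mem hC) hx
    rcases Multiset.mem_add.mp hx' with h | h
    · exact h
    · exact absurd (Multiset.eq_of_mem_replicate h ▸ hx) hmC

theorem sq_le_roneObj_or_exists (hA : ∀ x ∈ A, s ≤ x) (hs : 0 < s) (hm : m ≤ 0)
    (hsum : A.sum + 2 * m = s) (hp : IsPartitionOf parts (A + Multiset.replicate 2 m)) :
    s ^ 2 ≤ roneObj parts ∨ ∃ D ≤ A, roneObj parts = 2 * (D.sum - A.sum / 2) ^ 2 + s ^ 2 / 2 := by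
  have hmA : m ∉ A := fun h => by linarith [hA m h]
  rcases hp.exists_subset_or_eq_singleton_or_eq_pair hmA with
    ⟨C, hC, hC0, hCA⟩ | rfl | ⟨D, E, rfl, rfl⟩
  · obtain ⟨x, hx⟩ := Multiset.exists_mem_of_ne_zero hC0
    have hCs : s ≤ C.sum := (hA x (hCA hx)).trans
      (Multiset.single_le_sum (fun y hy => hs.le.trans (hA y (hCA hy))) x hx)
    exact Or.inl ((pow_le_pow_left₀ hs.le hCs 2).trans (sq_sum_le_roneObj hC))
  · refine Or.inl (le_of_eq ?_)
    simp [roneObj, ← hsum]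
    ring
  · refine Or.inr ⟨D, Multiset.le_add_right D E, ?_⟩
    rw [roneObj_pair, ← hsum]
    simp only [Multiset.sum_cons, Multiset.sum_add]
    ring

end IsPartitionOf

theorem Int.cast_div_two_of_even {α : Type*} [DivisionRing α] [CharZero α] {B : ℤ}
    (hB : Even B) : ((B / 2 : ℤ) : α) = (B : α) / 2 := by
  rw [Int.cast_div (even_iff_two_dvd.mp hB) (by simp), Int.cast_ofNat]

section Ground

variable {n : ℕ} {a : Fin n → ℤ} {s B : ℤ} {M : ℝ}

theorem roneObj_ground_ge_or_eq (hsmem : ∃ i, a i = s) (hsle : ∀ i, s ≤ a i)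
    (hB : B = ∑ i, a i) (hs : 0 < s) (hM : M = (B : ℝ) / 2 - (s : ℝ) / 2)
    {parts : Multiset (Multiset ℝ)} (hp : IsPartitionOf parts (ground a M)) :
    (s : ℝ) ^ 2 ≤ roneObj parts ∨ ∃ T : Finset (Fin n),
      roneObj parts = 2 * (∑ i ∈ T, (a i : ℝ) - B / 2) ^ 2 + (s : ℝ) ^ 2 / 2 := by
  have hsB : s ≤ B := by
    obtain ⟨i, rfl⟩ := hsmem
    exact hB ▸ Finset.single_le_sum (fun j _ => hs.le.trans (hsle j)) (Finset.mem_univ i)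
  have hAsum : (Finset.univ.val.map fun i => (a i : ℝ)).sum = B := by
    rw [← Finset.sum_eq_multiset_sum, hB, Int.cast_sum]
  have hsR : (0 : ℝ) < s := by exact_mod_cast hs
  have hsBR : (s : ℝ) ≤ B := by exact_mod_cast hsB
  have hA : ∀ x ∈ Finset.univ.val.map fun i => (a i : ℝ), (s : ℝ) ≤ x := by
    simp only [Multiset.mem_map, Finset.mem_val, Finset.mem_univ, true_and,
      forall_exists_index, forall_apply_eq_imp_iff]
    exact fun i => by exact_mod_cast hsle i
  rcases IsPartitionOf.sq_le_roneObj_or_exists hA hsR (by linarith)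
    (by rw [hAsum, hM]; ring) hp with h | ⟨D, hD, h⟩
  · exact Or.inl h
  · obtain ⟨T, -, rfl⟩ := Finset.exists_map_val_eq_of_le_map_val hD
    exact Or.inr ⟨T, by rw [h, hAsum, Finset.sum_eq_multiset_sum]⟩

theorem exists_isPartitionOf_ground_roneObj_eq (hB : B = ∑ i, a i)
    (hM : M = (B : ℝ) / 2 - (s : ℝ) / 2) (T : Finset (Fin n)) :
    ∃ parts, IsPartitionOf parts (ground a M) ∧
      roneObj parts = 2 * (∑ i ∈ T, (a i : ℝ) - B / 2) ^ 2 + (s : ℝ) ^ 2 / 2 := by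
  set f : Fin n → ℝ := fun i => (a i : ℝ)
  have hsplit : T.val.map f + Tᶜ.val.map f = Finset.univ.val.map f := by
    rw [← Multiset.map_add]
    exact congrArg (fun u => Multiset.map f (Finset.val u))
      (show T.disjUnion Tᶜ disjoint_compl_right = Finset.univ by simp)
  refine ⟨{-M ::ₘ T.val.map f, -M ::ₘ Tᶜ.val.map f}, by
    simpa [ground, hsplit] using isPartitionOf_pair_s13 (T.val.map f) (Tᶜ.val.map f) (-M), ?_⟩
  have hBR : (B : ℝ) = ∑ i ∈ T, f i + ∑ i ∈ Tᶜ, f i := by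
    rw [Finset.sum_add_sum_compl, hB, Int.cast_sum]
  rw [roneObj_pair, Multiset.sum_cons, Multiset.sum_cons, ← Finset.sum_eq_multiset_sum,
    ← Finset.sum_eq_multiset_sum, hM, hBR]
  ring

theorem roneObj_ground_gt_or_eq (hsmem : ∃ i, a i = s) (hsle : ∀ i, s ≤ a i)
    (hB : B = ∑ i, a i) (hBeven : Even B) (hs : 0 < s) (hM : M = (B : ℝ) / 2 - (s : ℝ) / 2)
    {parts : Multiset (Multiset ℝ)} (hp : IsPartitionOf parts (ground a M)) :
    (s : ℝ) ^ 2 / 2 < roneObj parts ∨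
      (∃ T : Finset (Fin n), ∑ i ∈ T, a i = B / 2) ∧ roneObj parts = (s : ℝ) ^ 2 / 2 := by
  have hsR : (0 : ℝ) < s := by exact_mod_cast hs
  rcases roneObj_ground_ge_or_eq hsmem hsle hB hs hM hp with h | ⟨T, hT⟩
  · have := pow_pos hsR 2
    exact Or.inl (by linarith)
  · rcases eq_or_ne (∑ i ∈ T, (a i : ℝ) - B / 2) 0 with h0 | h0
    · refine Or.inr ⟨⟨T, ?_⟩, by rw [hT, h0]; ring⟩
      rw [← Int.cast_inj (α := ℝ), Int.cast_sum, Int.cast_div_two_of_even hBeven]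
      linarith
    · have := sq_pos_of_ne_zero h0
      exact Or.inl (by rw [hT]; linarith)

end Ground


theorem roneObj_min_iff_partition_general {n : ℕ} (a : Fin n → ℤ) (s B : ℤ) (M : ℝ)
    (hsmem : ∃ i, a i = s) (hsle : ∀ i, s ≤ a i)
    (hB : B = ∑ i, a i) (hBeven : Even B) (hs : 0 < s)
    (hM : M = (B : ℝ) / 2 - (s : ℝ) / 2) :
    (IsLeast {x : ℝ | ∃ parts : Multiset (Multiset ℝ),
        IsPartitionOf parts (ground a M) ∧ x = roneObj parts} ((s : ℝ) ^ 2 / 2) ↔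
      ∃ T : Finset (Fin n), ∑ i ∈ T, a i = B / 2) ∧
    (¬(∃ T : Finset (Fin n), ∑ i ∈ T, a i = B / 2) →
      ∀ parts : Multiset (Multiset ℝ),
        IsPartitionOf parts (ground a M) → (s : ℝ) ^ 2 / 2 < roneObj parts) := by
  have key := fun parts (hp : IsPartitionOf parts (ground a M)) =>
    roneObj_ground_gt_or_eq hsmem hsle hB hBeven hs hM hp
  refine ⟨⟨fun hleast => ?_, fun ⟨T, hT⟩ => ⟨?_, ?_⟩⟩, fun hno parts hp => ?_⟩
  · obtain ⟨parts, hp, hobj⟩ := hleast.1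
    exact ((key parts hp).resolve_left hobj.not_lt).1
  · obtain ⟨parts, hp, hobj⟩ := exists_isPartitionOf_ground_roneObj_eq (s := s) hB hM T
    refine ⟨parts, hp, ?_⟩
    rw [hobj, ← Int.cast_sum, hT, Int.cast_div_two_of_even hBeven]
    ring
  · rintro x ⟨parts, hp, rfl⟩
    rcases key parts hp with hlt | ⟨-, heq⟩
    · exact hlt.le
    · exact heq.ge
  · exact (key parts hp).resolve_right fun h => hno h.1

/-- The minimum RONE-CC objective over all partitions of `{a 1, ..., a n, -M, -M}`
into nonempty parts equals `s²/2` if and only if some subset of the `a i` sums to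
`B/2`; otherwise every such partition has objective strictly greater than `s²/2`.
This is the combinatorial core of the reduction from Partition (Theorem 3). -/
theorem roneObj_min_iff_partition {n : ℕ} (a : Fin n → ℤ) (s B : ℤ) (M : ℝ)
    (hpos : ∀ i, 0 < a i) (hsmem : ∃ i, a i = s) (hsle : ∀ i, s ≤ a i)
    (hB : B = ∑ i, a i) (hseven : Even s) (hBeven : Even B) (hs : 0 < s)
    (hM : M = (B : ℝ) / 2 - (s : ℝ) / 2) :
    (IsLeast {x : ℝ | ∃ parts : Multiset (Multiset ℝ),
        IsPartitionOf parts (ground a M) ∧ x = roneObj parts} ((s : ℝ) ^ 2 / 2) ↔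
      ∃ T : Finset (Fin n), ∑ i ∈ T, a i = B / 2) ∧
    (¬(∃ T : Finset (Fin n), ∑ i ∈ T, a i = B / 2) →
      ∀ parts : Multiset (Multiset ℝ),
        IsPartitionOf parts (ground a M) → (s : ℝ) ^ 2 / 2 < roneObj parts) :=
  roneObj_min_iff_partition_general a s B M hsmem hsle hB hBeven hs hM
end
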